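/- arXiv:2006.02575 — 4 statements merged into one kernel-verified Lean document; each statement's English description precedes it below -/
import Mathlib

section
/- Let K ≥ 1, let w₁, …, w_K be positive real numbers summing to 1, let σ₁, …, σ_K be positive real numbers, let ε′ > 0, and set σ̄ = Σ_{k=1}^K w_k σ_k². Then the equation Σ_{k=1}^K w_k √(ε′⁴ + 4σ_k² S) = ε′² + 2S has a solution S > 0 if and only if ε′² < σ̄. -/
/-! Writing `√(a² + cS) = a + S · c / (√(a² + cS) + a)`, the equation becomes, for `S > 0`,
`Φ(S) = 2` with `Φ(S) = Σₖ wₖ cₖ / (√(a² + cₖS) + a)`, `a = ε'²`, `cₖ = 4σₖ²`. The weighted secant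
slope `Φ` is continuous, strictly below `Φ(0) = 2σ̄/ε'²` for `S > 0`, and tends to `0` at infinity;
so `Φ` takes the value `2` on `(0, ∞)` exactly when `Φ(0) > 2`. -/

open Filter Topology Finset

/-- The slope of the secant of `S ↦ √(a² + cS)` between `0` and `S`. -/
noncomputable def sqrtSecantSlope (a c S : ℝ) : ℝ := c / (√(a ^ 2 + c * S) + a)

lemma sqrt_sq_add_mul_eq_add_mul_sqrtSecantSlope {a c S : ℝ} (ha : 0 < a) (hcS : 0 ≤ c * S) :
    √(a ^ 2 + c * S) = a + S * sqrtSecantSlope a c S := by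
  have hden : 0 < √(a ^ 2 + c * S) + a := by positivity
  have hsq : √(a ^ 2 + c * S) ^ 2 = a ^ 2 + c * S := Real.sq_sqrt (by positivity)
  rw [sqrtSecantSlope, mul_div_assoc', add_div' _ _ _ hden.ne', eq_div_iff hden.ne']
  linear_combination hsq

lemma sqrtSecantSlope_zero (a c : ℝ) (ha : 0 ≤ a) : sqrtSecantSlope a c 0 = c / (2 * a) := by
  rw [sqrtSecantSlope, mul_zero, add_zero, Real.sqrt_sq ha, two_mul]

lemma sqrtSecantSlope_lt_sqrtSecantSlope_zero {a c S : ℝ} (ha : 0 < a) (hc : 0 < c) (hS : 0 < S) :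
    sqrtSecantSlope a c S < sqrtSecantSlope a c 0 := by
  rw [sqrtSecantSlope_zero a c ha.le, sqrtSecantSlope]
  have hlt : a < √(a ^ 2 + c * S) :=
    Real.lt_sqrt_of_sq_lt (lt_add_of_pos_right _ (mul_pos hc hS))
  gcongr
  linarith

lemma continuous_sqrtSecantSlope {a : ℝ} (ha : 0 < a) (c : ℝ) :
    Continuous (sqrtSecantSlope a c) :=
  continuous_const.div (by fun_prop) fun S => by positivity

lemma tendsto_sqrtSecantSlope_atTop (a : ℝ) {c : ℝ} (hc : 0 < c) :
    Tendsto (sqrtSecantSlope a c) atTop (𝓝 0) := by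
  have hlin : Tendsto (fun S => a ^ 2 + c * S) atTop atTop :=
    tendsto_atTop_add_const_left _ _ (tendsto_id.const_mul_atTop hc)
  exact tendsto_const_nhds.div_atTop
    (tendsto_atTop_add_const_right _ _ (Real.tendsto_sqrt_atTop.comp hlin))

section WeightedSum

variable {ι : Type*} [Fintype ι] {w c : ι → ℝ} {a : ℝ}

lemma sum_mul_sqrt_eq_iff_sum_mul_sqrtSecantSlope_eq (hw : ∑ k, w k = 1) (ha : 0 < a)
    (hc : ∀ k, 0 ≤ c k) {b S : ℝ} (hS : 0 < S) :
    ∑ k, w k * √(a ^ 2 + c k * S) = a + b * S ↔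
      ∑ k, w k * sqrtSecantSlope a (c k) S = b := by
  have hsum : ∑ k, w k * √(a ^ 2 + c k * S) = a + S * ∑ k, w k * sqrtSecantSlope a (c k) S := by
    simp only [sqrt_sq_add_mul_eq_add_mul_sqrtSecantSlope ha (mul_nonneg (hc _) hS.le), mul_add,
      sum_add_distrib, ← sum_mul, hw, one_mul, mul_sum]
    exact congrArg _ (sum_congr rfl fun k _ => by ring)
  rw [hsum, add_right_inj, mul_comm b, mul_right_inj' hS.ne']

theorem exists_pos_sum_mul_sqrt_eq_iff [Nonempty ι] (hw : ∀ k, 0 < w k) (hwsum : ∑ k, w k = 1)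
    (hc : ∀ k, 0 < c k) (ha : 0 < a) {b : ℝ} (hb : 0 < b) :
    (∃ S, 0 < S ∧ ∑ k, w k * √(a ^ 2 + c k * S) = a + b * S) ↔ 2 * a * b < ∑ k, w k * c k := by
  set Φ : ℝ → ℝ := fun S => ∑ k, w k * sqrtSecantSlope a (c k) S
  have hΦ0 : Φ 0 = (∑ k, w k * c k) / (2 * a) := by
    simp only [Φ, sqrtSecantSlope_zero _ _ ha.le, sum_div, mul_div_assoc]
  have hb0 : b < Φ 0 ↔ 2 * a * b < ∑ k, w k * c k := by
    rw [hΦ0, lt_div_iff₀ (by positivity), mul_comm b]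
  have hsolve := fun {S} (hS : 0 < S) =>
    sum_mul_sqrt_eq_iff_sum_mul_sqrtSecantSlope_eq (b := b) hwsum ha (fun k => (hc k).le) hS
  rw [← hb0]
  constructor
  · rintro ⟨S, hS, hSeq⟩
    rw [← (hsolve hS).1 hSeq]
    exact sum_lt_sum_of_nonempty univ_nonempty fun k _ =>
      mul_lt_mul_of_pos_left (sqrtSecantSlope_lt_sqrtSecantSlope_zero ha (hc k) hS) (hw k)
  · intro hbΦ
    have hΦcont : Continuous Φ :=
      continuous_finsetSum _ fun k _ => (continuous_sqrtSecantSlope ha (c k)).const_smul (w k)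
    have hΦlim : Tendsto Φ atTop (𝓝 0) := by
      simpa using tendsto_finsetSum univ fun k _ =>
        (tendsto_sqrtSecantSlope_atTop a (hc k)).const_mul (w k)
    obtain ⟨T, hΦT, hT⟩ := ((hΦlim.eventually (gt_mem_nhds hb)).and (eventually_gt_atTop 0)).exists
    obtain ⟨S, ⟨hS0, -⟩, hΦS⟩ :=
      intermediate_value_Icc' hT.le hΦcont.continuousOn ⟨hΦT.le, hbΦ.le⟩
    have hS : 0 < S := hS0.lt_of_ne (by rintro rfl; exact hbΦ.ne' hΦS)
    exact ⟨S, hS, (hsolve hS).2 hΦS⟩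

end WeightedSum

/-- With `K ≥ 1`, positive weights `w` summing to 1, positive `σ_k`, `ε' > 0`
and `σ̄ = Σ_k w_k σ_k²`, the equation `Σ_k w_k √(ε'⁴ + 4 σ_k² S) = ε'² + 2 S` has a
solution `S > 0` if and only if `ε'² < σ̄`. -/
theorem fixed_point_product_has_positive_solution_iff
    (K : ℕ) (hK : 1 ≤ K) (w σ : Fin K → ℝ)
    (hw : ∀ k, 0 < w k) (hwsum : ∑ k, w k = 1) (hσ : ∀ k, 0 < σ k)
    (ε' : ℝ) (hε' : 0 < ε') (σbar : ℝ) (hσbar : σbar = ∑ k, w k * σ k ^ 2) :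
    (∃ S : ℝ, 0 < S ∧
        ∑ k, w k * Real.sqrt (ε' ^ 4 + 4 * σ k ^ 2 * S) = ε' ^ 2 + 2 * S)
      ↔ ε' ^ 2 < σbar := by
  have : Nonempty (Fin K) := ⟨⟨0, hK⟩⟩
  have hpow : ε' ^ 4 = (ε' ^ 2) ^ 2 := by ring
  have hcond : ∑ k, w k * (4 * σ k ^ 2) = 4 * σbar := by
    rw [hσbar, mul_sum]
    exact sum_congr rfl fun k _ => by ring
  rw [hpow, exists_pos_sum_mul_sqrt_eq_iff hw hwsum (fun k => by have := hσ k; positivity)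
    (pow_pos hε' 2) two_pos, hcond]
  constructor <;> intro h <;> linarith
end

section
/- Let K ≥ 1, let w₁, …, w_K be positive real numbers summing to 1, let σ₁, …, σ_K be positive real numbers, and let ε′ > 0. Then the equation Σ_{k=1}^K w_k √(ε′⁴ + 4σ_k² S) = √(ε′⁴ + 4S²) has a solution S > 0 with min_k σ_k² ≤ S ≤ max_k σ_k². -/
/-- With `K ≥ 1`, positive weights `w` summing to 1, positive `σ_k` and
`ε' > 0`, the equation `Σ_k w_k √(ε'⁴ + 4 σ_k² S) = √(ε'⁴ + 4 S²)` has a solution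
`S > 0` with `min_k σ_k² ≤ S ≤ max_k σ_k²`.  (Here `min_k σ_k² ≤ S` is expressed as
`∃ k, σ k ^ 2 ≤ S` and `S ≤ max_k σ_k²` as `∃ k, S ≤ σ k ^ 2`, which is equivalent
since the index set is finite and nonempty.) -/
theorem fixed_point_divergence_has_positive_solution
    (K : ℕ) (hK : 1 ≤ K) (w σ : Fin K → ℝ)
    (hw : ∀ k, 0 < w k) (hwsum : ∑ k, w k = 1) (hσ : ∀ k, 0 < σ k)
    (ε' : ℝ) (hε' : 0 < ε') :
    ∃ S : ℝ, 0 < S ∧ (∃ k, σ k ^ 2 ≤ S) ∧ (∃ k, S ≤ σ k ^ 2) ∧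
      ∑ k, w k * Real.sqrt (ε' ^ 4 + 4 * σ k ^ 2 * S)
        = Real.sqrt (ε' ^ 4 + 4 * S ^ 2) := by
  haveI : NeZero K := ⟨by omega⟩
  obtain ⟨i₀, hi₀⟩ := Finite.exists_min σ
  obtain ⟨i₁, hi₁⟩ := Finite.exists_max σ
  set m := σ i₀ ^ 2 with hm_def
  set M := σ i₁ ^ 2 with hM_def
  have hσsq : ∀ k, m ≤ σ k ^ 2 := fun k =>
    pow_le_pow_left₀ (hσ i₀).le (hi₀ k) 2
  have hσsq' : ∀ k, σ k ^ 2 ≤ M := fun k =>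
    pow_le_pow_left₀ (hσ k).le (hi₁ k) 2
  have hm : 0 < m := pow_pos (hσ i₀) 2
  have hmM : m ≤ M := (hσsq i₁)
  set f : ℝ → ℝ := fun S =>
    ∑ k, w k * Real.sqrt (ε' ^ 4 + 4 * σ k ^ 2 * S) - Real.sqrt (ε' ^ 4 + 4 * S ^ 2)
    with hf_def
  have hcont : ContinuousOn f (Set.Icc m M) := by
    apply ContinuousOn.sub
    · exact continuousOn_finset_sum _ fun k _ => (continuousOn_const.mul
        ((continuousOn_const.add (continuousOn_const.mul continuousOn_id)).sqrt))
    · exact ((continuousOn_const.add (continuousOn_const.mul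
        ((continuousOn_id.pow 2)))).sqrt)
  have hfm : 0 ≤ f m := by
    have h1 : ∀ k ∈ Finset.univ, w k * Real.sqrt (ε' ^ 4 + 4 * m ^ 2)
        ≤ w k * Real.sqrt (ε' ^ 4 + 4 * σ k ^ 2 * m) := by
      intro k _
      apply mul_le_mul_of_nonneg_left _ (hw k).le
      apply Real.sqrt_le_sqrt
      nlinarith [hσsq k]
    have h2 : ∑ k, w k * Real.sqrt (ε' ^ 4 + 4 * m ^ 2)
        ≤ ∑ k, w k * Real.sqrt (ε' ^ 4 + 4 * σ k ^ 2 * m) :=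
      Finset.sum_le_sum h1
    have h3 : ∑ k, w k * Real.sqrt (ε' ^ 4 + 4 * m ^ 2)
        = Real.sqrt (ε' ^ 4 + 4 * m ^ 2) := by
      rw [← Finset.sum_mul, hwsum, one_mul]
    simp only [hf_def]
    linarith [h2, h3.symm]
  have hfM : f M ≤ 0 := by
    have h1 : ∀ k ∈ Finset.univ, w k * Real.sqrt (ε' ^ 4 + 4 * σ k ^ 2 * M)
        ≤ w k * Real.sqrt (ε' ^ 4 + 4 * M ^ 2) := by
      intro k _
      apply mul_le_mul_of_nonneg_left _ (hw k).le
      apply Real.sqrt_le_sqrt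
      nlinarith [hσsq' k, hm.trans_le hmM]
    have h2 : ∑ k, w k * Real.sqrt (ε' ^ 4 + 4 * σ k ^ 2 * M)
        ≤ ∑ k, w k * Real.sqrt (ε' ^ 4 + 4 * M ^ 2) :=
      Finset.sum_le_sum h1
    have h3 : ∑ k, w k * Real.sqrt (ε' ^ 4 + 4 * M ^ 2)
        = Real.sqrt (ε' ^ 4 + 4 * M ^ 2) := by
      rw [← Finset.sum_mul, hwsum, one_mul]
    simp only [hf_def]
    linarith [h2, h3.symm]
  have hsub := intermediate_value_Icc' hmM hcont
  obtain ⟨S, hS, hfS⟩ := hsub ⟨hfM, hfm⟩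
  refine ⟨S, hm.trans_le hS.1, ⟨i₀, hS.1⟩, ⟨i₁, hS.2⟩, ?_⟩
  have : f S = 0 := hfS
  simp only [hf_def] at this
  linarith
end

section
/- Let ε′ > 0 and ε = 2ε′². Let K ≥ 1, let w₁, …, w_K be positive reals summing to 1, let μ₁, …, μ_K ∈ ℝ and σ₁, …, σ_K > 0, and set α_k = N(μ_k, σ_k²), μ̄ = Σ_k w_k μ_k, and σ̄ = Σ_k w_k σ_k². If ε′² ≥ σ̄, then the Dirac measure δ_{μ̄} at μ̄ minimizes the functional α ↦ Σ_{k=1}^K w_k OT_ε(α_k, α) over all sub-Gaussian probability measures α on ℝ. -/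
open MeasureTheory ProbabilityTheory
open scoped ENNReal Classical

/-- Kullback–Leibler divergence `KL(π ‖ ρ)`, valued in `EReal`:
`∫ log (dπ/dρ) dπ` when `π ≪ ρ` and the log-likelihood ratio is `π`-integrable,
and `⊤` otherwise. -/
noncomputable def KLdiv {X : Type*} [MeasurableSpace X] (π ρ : Measure X) : EReal :=
  if π ≪ ρ ∧ Integrable (fun x => Real.log (π.rnDeriv ρ x).toReal) π
  then ((∫ x, Real.log (π.rnDeriv ρ x).toReal ∂π : ℝ) : EReal)
  else ⊤

/-- Entropic optimal transport cost on `ℝ` with quadratic cost and product reference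
measure: `OT_ε(α, β) = inf { ∫ (x-y)² dπ + ε KL(π ‖ α ⊗ β) }` over couplings `π`
of `α` and `β`. -/
noncomputable def OTe (ε : ℝ) (α β : Measure ℝ) : EReal :=
  ⨅ (π : Measure (ℝ × ℝ)) (_ : IsProbabilityMeasure π)
    (_ : π.fst = α) (_ : π.snd = β),
    (((∫⁻ p, ENNReal.ofReal ((p.1 - p.2) ^ 2) ∂π : ℝ≥0∞) : EReal)
      + (ε : EReal) * KLdiv π (α.prod β))

/-- Sinkhorn divergence `S_ε(α,β) = OT_ε(α,β) − ½ OT_ε(α,α) − ½ OT_ε(β,β)`. -/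
noncomputable def Sdiv (ε : ℝ) (α β : Measure ℝ) : EReal :=
  OTe ε α β - ((1 / 2 : ℝ) : EReal) * OTe ε α α - ((1 / 2 : ℝ) : EReal) * OTe ε β β

/-- A probability measure on `ℝ` is sub-Gaussian if `∫ exp (x²/q) dα < ∞` for some `q > 0`. -/
def SubGaussian (α : Measure ℝ) : Prop :=
  ∃ q : ℝ, 0 < q ∧ ∫⁻ x, ENNReal.ofReal (Real.exp (x ^ 2 / q)) ∂α < ⊤

/-! `α_k ⊗ δ_m` is a coupling with zero KL term, so `OT_ε(α_k, δ_m) ≤ ∫ (x - m)² dα_k`.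
Conversely, weak duality holds: if the Gibbs kernel `exp ((f ⊕ g - c) / ε)` of potentials `f, g`
has mass at most one under `α ⊗ β`, the Donsker–Varadhan inequality gives
`∫ f dα + ∫ g dβ ≤ OT_ε(α, β)`. For `α_k` Gaussian and `f(x) = (x - m)²`, the Gaussian moment
generating function yields a quadratic `g_k` with kernel mass exactly one. For `m = μ̄` the
weighted average of the `g_k` is `(1 - 2σ̄/ε) (y - μ̄)²`, nonnegative as `ε'² ≥ σ̄`, so the
weighted lower bounds for any `α` dominate the weighted upper bounds for `δ_μ̄`. -/

open scoped NNReal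

section KullbackLeibler

variable {X : Type*} [MeasurableSpace X] {π ρ : Measure X}

lemma integral_sub_log_integral_exp_le_integral_llr [IsProbabilityMeasure π] [SigmaFinite ρ]
    {g : X → ℝ} (hπρ : π ≪ ρ) (hllr : Integrable (llr π ρ) π) (hg : Integrable g π)
    (hexp : Integrable (fun x ↦ Real.exp (g x)) ρ) :
    ∫ x, g x ∂π - Real.log (∫ x, Real.exp (g x) ∂ρ) ≤ ∫ x, llr π ρ x ∂π := by
  have : NeZero ρ := ⟨fun h ↦ IsProbabilityMeasure.ne_zero π
    (Measure.absolutelyContinuous_zero_iff.1 (h ▸ hπρ))⟩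
  have := isProbabilityMeasure_tilted hexp
  have hgibbs : 0 ≤ ∫ x, llr π (ρ.tilted g) x ∂π := by
    rw [← InformationTheory.toReal_klDiv_of_measure_eq
      (hπρ.trans (absolutelyContinuous_tilted hexp)) (by simp)]
    exact ENNReal.toReal_nonneg
  rw [integral_llr_tilted_right hπρ hg hexp hllr] at hgibbs
  linarith

lemma KLdiv_of_ac_of_integrable (hπρ : π ≪ ρ) (hllr : Integrable (llr π ρ) π) :
    KLdiv π ρ = ((∫ x, llr π ρ x ∂π : ℝ) : EReal) :=
  if_pos ⟨hπρ, hllr⟩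

lemma KLdiv_self (π : Measure X) [SigmaFinite π] : KLdiv π π = 0 := by
  have hllr := llr_self π
  rw [KLdiv_of_ac_of_integrable Measure.AbsolutelyContinuous.rfl
    ((integrable_zero _ _ _).congr hllr.symm), integral_congr_ae hllr]
  simp

lemma KLdiv_of_not_ac_and_integrable (h : ¬(π ≪ ρ ∧ Integrable (llr π ρ) π)) :
    KLdiv π ρ = ⊤ :=
  if_neg h

end KullbackLeibler

lemma EReal.coe_finset_sum {ι : Type*} (s : Finset ι) (f : ι → ℝ) :
    ((∑ i ∈ s, f i : ℝ) : EReal) = ∑ i ∈ s, (f i : EReal) :=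
  map_sum (⟨⟨((↑) : ℝ → EReal), EReal.coe_zero⟩, EReal.coe_add⟩ : ℝ →+ EReal) f s

lemma EReal.sum_mul_le_sum_mul_of_real_bounds {ι : Type*} (s : Finset ι) {w a b : ι → ℝ}
    {A B : ι → EReal} (hw : ∀ i ∈ s, 0 ≤ w i) (hA : ∀ i ∈ s, A i ≤ a i)
    (hB : ∀ i ∈ s, (b i : EReal) ≤ B i) (hab : ∑ i ∈ s, w i * a i ≤ ∑ i ∈ s, w i * b i) :
    ∑ i ∈ s, (w i : EReal) * A i ≤ ∑ i ∈ s, (w i : EReal) * B i :=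
  calc ∑ i ∈ s, (w i : EReal) * A i
      ≤ ∑ i ∈ s, ((w i * a i : ℝ) : EReal) :=
        Finset.sum_le_sum fun i hi ↦ EReal.coe_mul _ _ ▸ mul_le_mul_of_nonneg_left (hA i hi)
          (EReal.coe_nonneg.2 (hw i hi))
    _ ≤ ∑ i ∈ s, ((w i * b i : ℝ) : EReal) := by
        rw [← EReal.coe_finset_sum, ← EReal.coe_finset_sum]
        exact EReal.coe_le_coe_iff.2 hab
    _ ≤ ∑ i ∈ s, (w i : EReal) * B i :=
        Finset.sum_le_sum fun i hi ↦ EReal.coe_mul _ _ ▸ mul_le_mul_of_nonneg_left (hB i hi)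
          (EReal.coe_nonneg.2 (hw i hi))

lemma OTe_le_lintegral_prod (ε : ℝ) (α β : Measure ℝ) [IsProbabilityMeasure α]
    [IsProbabilityMeasure β] :
    OTe ε α β ≤ ((∫⁻ p, ENNReal.ofReal ((p.1 - p.2) ^ 2) ∂(α.prod β) : ℝ≥0∞) : EReal) := by
  refine iInf_le_of_le (α.prod β) <| iInf_le_of_le inferInstance <|
    iInf_le_of_le Measure.fst_prod <| iInf_le_of_le Measure.snd_prod ?_
  simp [KLdiv_self]

lemma OTe_dirac_le (ε : ℝ) {α : Measure ℝ} [IsProbabilityMeasure α] {m : ℝ}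
    (hα : Integrable (fun x ↦ (x - m) ^ 2) α) :
    OTe ε α (Measure.dirac m) ≤ ((∫ x, (x - m) ^ 2 ∂α : ℝ) : EReal) := by
  refine (OTe_le_lintegral_prod ε α _).trans_eq ?_
  rw [lintegral_prod _ (by fun_prop)]
  simp only [lintegral_dirac]
  rw [← ofReal_integral_eq_lintegral_ofReal hα (ae_of_all _ fun x ↦ sq_nonneg _),
    EReal.coe_ennreal_ofReal, max_eq_left (integral_nonneg fun x ↦ sq_nonneg _)]

section Duality

variable {ε : ℝ} {α β : Measure ℝ}

lemma integral_add_integral_le_of_coupling (hε : 0 < ε) [SigmaFinite α] [SigmaFinite β]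
    {f g : ℝ → ℝ} (hfm : Measurable f) (hf : Integrable f α) (hgm : Measurable g)
    (hg : Integrable g β)
    (hexp : ∫⁻ p, ENNReal.ofReal (Real.exp ((f p.1 + g p.2 - (p.1 - p.2) ^ 2) / ε))
      ∂(α.prod β) ≤ 1)
    {π : Measure (ℝ × ℝ)} [IsProbabilityMeasure π] (hfst : π.fst = α) (hsnd : π.snd = β)
    (hπ : π ≪ α.prod β) (hllr : Integrable (llr π (α.prod β)) π)
    (hcost : Integrable (fun p : ℝ × ℝ ↦ (p.1 - p.2) ^ 2) π) :
    ∫ x, f x ∂α + ∫ y, g y ∂β ≤ ∫ p, (p.1 - p.2) ^ 2 ∂π + ε * ∫ p, llr π (α.prod β) p ∂π := by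
  subst hfst hsnd
  set h : ℝ × ℝ → ℝ := fun p ↦ (f p.1 + g p.2 - (p.1 - p.2) ^ 2) / ε
  have hhm : Measurable h := by fun_prop
  have hf' : Integrable (fun p ↦ f p.1) π := hf.comp_measurable measurable_fst
  have hg' : Integrable (fun p ↦ g p.2) π := hg.comp_measurable measurable_snd
  have hexp_int : Integrable (fun p ↦ Real.exp (h p)) (π.fst.prod π.snd) :=
    ⟨hhm.exp.aestronglyMeasurable, by
      rw [hasFiniteIntegral_iff_ofReal (ae_of_all _ fun p ↦ (Real.exp_pos _).le)]
      exact hexp.trans_lt ENNReal.one_lt_top⟩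
  have hlog : Real.log (∫ p, Real.exp (h p) ∂(π.fst.prod π.snd)) ≤ 0 := by
    refine Real.log_nonpos (integral_nonneg fun p ↦ (Real.exp_pos _).le) ?_
    rw [integral_eq_lintegral_of_nonneg_ae (ae_of_all _ fun p ↦ (Real.exp_pos _).le)
      hhm.exp.aestronglyMeasurable]
    exact ENNReal.toReal_le_of_le_ofReal zero_le_one (by simpa using hexp)
  have hgibbs := integral_sub_log_integral_exp_le_integral_llr (g := h) hπ hllr
    (((hf'.add hg').sub hcost).div_const ε) hexp_int
  have hh : ∫ p, h p ∂π = (∫ x, f x ∂π.fst + ∫ y, g y ∂π.snd - ∫ p, (p.1 - p.2) ^ 2 ∂π) / ε := by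
    have hf_fst : ∫ x, f x ∂π.fst = ∫ p, f p.1 ∂π :=
      integral_map measurable_fst.aemeasurable hf.aestronglyMeasurable
    have hg_snd : ∫ y, g y ∂π.snd = ∫ p, g p.2 ∂π :=
      integral_map measurable_snd.aemeasurable hg.aestronglyMeasurable
    rw [integral_div, integral_sub (f := fun p ↦ f p.1 + g p.2) (hf'.add hg') hcost,
      integral_add hf' hg', hf_fst, hg_snd]
  rw [hh, div_sub' hε.ne', div_le_iff₀ hε] at hgibbs
  linarith [mul_nonneg hε.le (neg_nonneg.2 hlog)]

lemma integral_add_integral_le_OTe (hε : 0 < ε) [SigmaFinite α] [SigmaFinite β]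
    {f g : ℝ → ℝ} (hfm : Measurable f) (hf : Integrable f α) (hgm : Measurable g)
    (hg : Integrable g β)
    (hexp : ∫⁻ p, ENNReal.ofReal (Real.exp ((f p.1 + g p.2 - (p.1 - p.2) ^ 2) / ε))
      ∂(α.prod β) ≤ 1) :
    ((∫ x, f x ∂α + ∫ y, g y ∂β : ℝ) : EReal) ≤ OTe ε α β := by
  refine le_iInf fun π ↦ le_iInf fun _ ↦ le_iInf fun hfst ↦ le_iInf fun hsnd ↦ ?_
  by_cases hKL : π ≪ α.prod β ∧ Integrable (llr π (α.prod β)) π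
  swap
  · rw [KLdiv_of_not_ac_and_integrable hKL, EReal.coe_mul_top_of_pos hε,
      EReal.add_top_of_ne_bot (EReal.coe_ennreal_ne_bot _)]
    exact le_top
  rw [KLdiv_of_ac_of_integrable hKL.1 hKL.2, ← EReal.coe_mul]
  by_cases hC : ∫⁻ p, ENNReal.ofReal ((p.1 - p.2) ^ 2) ∂π = ⊤
  · rw [hC, EReal.coe_ennreal_top, EReal.top_add_coe]
    exact le_top
  have hcost : Integrable (fun p : ℝ × ℝ ↦ (p.1 - p.2) ^ 2) π :=
    ⟨by fun_prop, by
      rw [hasFiniteIntegral_iff_ofReal (ae_of_all _ fun p ↦ sq_nonneg _)]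
      exact lt_top_iff_ne_top.2 hC⟩
  rw [← ofReal_integral_eq_lintegral_ofReal hcost (ae_of_all _ fun p ↦ sq_nonneg _),
    EReal.coe_ennreal_ofReal, max_eq_left (integral_nonneg fun p ↦ sq_nonneg _),
    ← EReal.coe_add, EReal.coe_le_coe_iff]
  exact integral_add_integral_le_of_coupling hε hfm hf hgm hg hexp hfst hsnd hKL.1 hKL.2 hcost

end Duality

lemma MeasureTheory.MemLp.integrable_sub_const_sq {β : Measure ℝ} [IsFiniteMeasure β]
    (hβ : MemLp id 2 β) (m : ℝ) : Integrable (fun y ↦ (y - m) ^ 2) β :=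
  (hβ.sub (memLp_const m)).integrable_sq

lemma SubGaussian.memLp_two {α : Measure ℝ} (hα : SubGaussian α) : MemLp id 2 α := by
  obtain ⟨q, hq, hfin⟩ := hα
  have hexp : Integrable (fun x : ℝ ↦ Real.exp (x ^ 2 / q)) α :=
    ⟨by fun_prop, by
      rwa [hasFiniteIntegral_iff_ofReal (ae_of_all _ fun x ↦ (Real.exp_pos _).le)]⟩
  rw [memLp_two_iff_integrable_sq aestronglyMeasurable_id]
  refine (hexp.const_mul q).mono' (by fun_prop) (ae_of_all _ fun x ↦ ?_)
  have hle : x ^ 2 / q ≤ Real.exp (x ^ 2 / q) := by linarith [Real.add_one_le_exp (x ^ 2 / q)]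
  rw [Real.norm_of_nonneg (sq_nonneg _), ← div_le_iff₀' hq]
  exact hle

section Gaussian

noncomputable def gaussianDualPotential (ε μ₀ v m y : ℝ) : ℝ :=
  (1 - 2 * v / ε) * (y - m) ^ 2 - 2 * (μ₀ - m) * (y - m)

variable {ε : ℝ}

lemma lintegral_exp_gaussianDualPotential (hε : ε ≠ 0) (μ₀ m : ℝ) (v : ℝ≥0) (β : Measure ℝ)
    [IsProbabilityMeasure β] :
    ∫⁻ p, ENNReal.ofReal (Real.exp (((p.1 - m) ^ 2 + gaussianDualPotential ε μ₀ v m p.2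
      - (p.1 - p.2) ^ 2) / ε)) ∂((gaussianReal μ₀ v).prod β) = 1 := by
  suffices hinner : ∀ y, ∫⁻ x, ENNReal.ofReal (Real.exp (((x - m) ^ 2
      + gaussianDualPotential ε μ₀ v m y - (x - y) ^ 2) / ε)) ∂gaussianReal μ₀ v = 1 by
    rw [lintegral_prod_symm _ (by unfold gaussianDualPotential; fun_prop)]
    simp [hinner]
  intro y
  set t := 2 * (y - m) / ε
  have hsplit : ∀ x, Real.exp (((x - m) ^ 2 + gaussianDualPotential ε μ₀ v m y - (x - y) ^ 2) / ε)
      = Real.exp (-(μ₀ * t + v * t ^ 2 / 2)) * Real.exp (t * x) := by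
    intro x
    rw [← Real.exp_add]
    congr 1
    simp only [gaussianDualPotential, t]
    field_simp
    ring
  have hmgf : ∫ x, Real.exp (t * x) ∂gaussianReal μ₀ v = Real.exp (μ₀ * t + v * t ^ 2 / 2) :=
    congrFun mgf_fun_id_gaussianReal t
  simp_rw [hsplit]
  rw [← ofReal_integral_eq_lintegral_ofReal ((integrable_exp_mul_gaussianReal t).const_mul _)
    (ae_of_all _ fun x ↦ by positivity), integral_const_mul, hmgf, ← Real.exp_add]
  simp

lemma MeasureTheory.MemLp.integrable_gaussianDualPotential {β : Measure ℝ} [IsFiniteMeasure β]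
    (hβ : MemLp id 2 β) (ε μ₀ v m : ℝ) : Integrable (gaussianDualPotential ε μ₀ v m) β :=
  ((hβ.integrable_sub_const_sq m).const_mul _).sub
    (((hβ.integrable one_le_two).sub (integrable_const m)).const_mul _)

lemma integral_add_integral_gaussianDualPotential_le_OTe (hε : 0 < ε) (μ₀ m : ℝ) (v : ℝ≥0)
    {β : Measure ℝ} [IsProbabilityMeasure β] (hβ : MemLp id 2 β) :
    ((∫ x, (x - m) ^ 2 ∂gaussianReal μ₀ v + ∫ y, gaussianDualPotential ε μ₀ v m y ∂β : ℝ) :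
      EReal) ≤ OTe ε (gaussianReal μ₀ v) β :=
  integral_add_integral_le_OTe hε (by fun_prop)
    ((memLp_id_gaussianReal 2).integrable_sub_const_sq m)
    (by unfold gaussianDualPotential; fun_prop) (hβ.integrable_gaussianDualPotential ε μ₀ v m)
    (lintegral_exp_gaussianDualPotential hε.ne' μ₀ m v β).le

lemma sum_mul_gaussianDualPotential {ι : Type*} (s : Finset ι) {w μ v : ι → ℝ}
    (hw : ∑ i ∈ s, w i = 1) (ε m y : ℝ) :
    ∑ i ∈ s, w i * gaussianDualPotential ε (μ i) (v i) m y
      = gaussianDualPotential ε (∑ i ∈ s, w i * μ i) (∑ i ∈ s, w i * v i) m y := by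
  have hterm : ∀ i, w i * gaussianDualPotential ε (μ i) (v i) m y
      = (y - m) ^ 2 * w i - 2 * (y - m) ^ 2 / ε * (w i * v i)
        - 2 * (y - m) * (w i * μ i) + 2 * m * (y - m) * w i := fun i ↦ by
    unfold gaussianDualPotential; ring
  rw [Finset.sum_congr rfl fun i _ ↦ hterm i]
  simp only [Finset.sum_add_distrib, Finset.sum_sub_distrib, ← Finset.mul_sum, hw]
  unfold gaussianDualPotential
  ring

lemma gaussianDualPotential_self_nonneg (hε : 0 < ε) {v : ℝ} (hv : 2 * v ≤ ε) (m y : ℝ) :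
    0 ≤ gaussianDualPotential ε m v m y := by
  have : 2 * v / ε ≤ 1 := (div_le_one hε).2 hv
  simp only [gaussianDualPotential, sub_self, mul_zero, zero_mul, sub_zero]
  exact mul_nonneg (by linarith) (sq_nonneg _)

end Gaussian

theorem ot_product_gaussian_barycenter_dirac_general
    (ε' ε : ℝ) (hε' : 0 < ε') (hε : ε = 2 * ε' ^ 2)
    (K : ℕ) (w μ σ : Fin K → ℝ)
    (hw : ∀ k, 0 < w k) (hwsum : ∑ k, w k = 1)
    (μbar σbar : ℝ) (hμbar : μbar = ∑ k, w k * μ k) (hσbar : σbar = ∑ k, w k * σ k ^ 2)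
    (hbig : ε' ^ 2 ≥ σbar) :
    ∀ α : Measure ℝ, IsProbabilityMeasure α → SubGaussian α →
      ∑ k, ((w k : ℝ) : EReal) *
          OTe ε (gaussianReal (μ k) ((σ k ^ 2).toNNReal)) (Measure.dirac μbar)
        ≤ ∑ k, ((w k : ℝ) : EReal) *
          OTe ε (gaussianReal (μ k) ((σ k ^ 2).toNNReal)) α := by
  intro α _ hα
  have hεpos : 0 < ε := by rw [hε]; positivity
  have hα2 := hα.memLp_two
  refine EReal.sum_mul_le_sum_mul_of_real_bounds Finset.univ (fun k _ ↦ (hw k).le)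
    (fun k _ ↦ OTe_dirac_le ε ((memLp_id_gaussianReal 2).integrable_sub_const_sq μbar))
    (fun k _ ↦ integral_add_integral_gaussianDualPotential_le_OTe hεpos (μ k) μbar _ hα2) ?_
  have hpot : 0 ≤ ∑ k, w k * ∫ y, gaussianDualPotential ε (μ k) (σ k ^ 2).toNNReal μbar y ∂α := by
    simp_rw [← integral_const_mul]
    rw [← integral_finsetSum _ fun k _ ↦ (hα2.integrable_gaussianDualPotential _ _ _ _).const_mul _]
    refine integral_nonneg fun y ↦ ?_
    simp only [sum_mul_gaussianDualPotential _ hwsum, ← hμbar, Real.coe_toNNReal _ (sq_nonneg _),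
      ← hσbar]
    exact gaussianDualPotential_self_nonneg hεpos (by linarith) μbar y
  simp only [mul_add, Finset.sum_add_distrib]
  linarith

/-- shrinking bias of `OT_ε^⊗`, degenerate case: with `ε = 2ε'²`,
Gaussians `α_k = N(μ_k, σ_k²)`, positive weights summing to 1, `μ̄ = Σ w_k μ_k`,
`σ̄ = Σ w_k σ_k²`, if `ε'² ≥ σ̄` then the Dirac measure at `μ̄` minimizes
`α ↦ Σ_k w_k OT_ε(α_k, α)` over sub-Gaussian probability measures. -/
theorem ot_product_gaussian_barycenter_dirac
    (ε' ε : ℝ) (hε' : 0 < ε') (hε : ε = 2 * ε' ^ 2)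
    (K : ℕ) (hK : 1 ≤ K) (w μ σ : Fin K → ℝ)
    (hw : ∀ k, 0 < w k) (hwsum : ∑ k, w k = 1) (hσ : ∀ k, 0 < σ k)
    (μbar σbar : ℝ) (hμbar : μbar = ∑ k, w k * μ k) (hσbar : σbar = ∑ k, w k * σ k ^ 2)
    (hbig : ε' ^ 2 ≥ σbar) :
    ∀ α : Measure ℝ, IsProbabilityMeasure α → SubGaussian α →
      ∑ k, ((w k : ℝ) : EReal) *
          OTe ε (gaussianReal (μ k) ((σ k ^ 2).toNNReal)) (Measure.dirac μbar)
        ≤ ∑ k, ((w k : ℝ) : EReal) *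
          OTe ε (gaussianReal (μ k) ((σ k ^ 2).toNNReal)) α :=
  ot_product_gaussian_barycenter_dirac_general ε' ε hε' hε K w μ σ hw hwsum μbar σbar hμbar hσbar
    hbig
end

section
/- Let α, h₁, h₂ : ℝ^d → ℝ be probability density functions (nonnegative, Lebesgue-integrable with integral 1) with α everywhere positive, and set h = h₁ − h₂. Define E(ρ) = ∫ ρ(x)(log ρ(x) − 1) dx for a nonnegative density ρ. Assume that E(α + t h) is finite and that α + t h is a nonnegative density for all sufficiently small t ≥ 0, and that ∫ |h(x)| · |log α(x)| dx < ∞. Then the one-sided derivative of t ↦ E(α + t h) at t = 0 exists and equals ∫ h(x) log α(x) dx. -/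
/-!
The integrand `φ(s) = s (log s - 1)` is convex with `φ'(s) = log s`. Hence for each `x` the
difference quotient `(φ(α x + t h x) - φ(α x)) / t` is nondecreasing in `t > 0` and bounded below
by its limit `h x log (α x)`; up to a fixed `t₀` it is therefore dominated by
`|h log α|` plus the quotient at `t₀`, and dominated convergence as `t ↓ 0` gives the derivative.
-/

open MeasureTheory Topology Set Filter

/-- Only `‖F'‖` is assumed integrable: `F'` is measurable anyway, as the pointwise limit of the
slopes `slope (F · x) a t`. -/
theorem hasDerivWithinAt_integral_Ici_of_convexOn {X : Type*} [MeasurableSpace X]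
    {μ : Measure X} {F : ℝ → X → ℝ} {F' : X → ℝ} {a b : ℝ} (hab : a < b)
    (hconv : ∀ x, ConvexOn ℝ (Icc a b) (F · x))
    (hderiv : ∀ x, HasDerivWithinAt (F · x) (F' x) (Ioi a) a)
    (hint : ∀ t ∈ Icc a b, Integrable (F t) μ)
    (hF' : Integrable (fun x => ‖F' x‖) μ) :
    HasDerivWithinAt (fun t => ∫ x, F t x ∂μ) (∫ x, F' x ∂μ) (Ici a) a := by
  have ha : a ∈ Icc a b := left_mem_Icc.2 hab.le
  have hb : b ∈ Icc a b := right_mem_Icc.2 hab.le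
  have hslope_int : ∀ t ∈ Icc a b, Integrable (fun x => slope (F · x) a t) μ := fun t ht =>
    ((hint t ht).sub (hint a ha)).smul (t - a)⁻¹
  have hslope_bound : ∀ t ∈ Ioc a b, ∀ x, ‖slope (F · x) a t‖ ≤ ‖F' x‖ + ‖slope (F · x) a b‖ := by
    intro t ht x
    have hlow := (hconv x).le_slope_of_hasDerivWithinAt_Ioi ha (Ioc_subset_Icc_self ht) ht.1
      (hderiv x)
    have hup := (hconv x).slope_mono ha ⟨Ioc_subset_Icc_self ht, ht.1.ne'⟩ ⟨hb, hab.ne'⟩ ht.2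
    exact (abs_le_max_abs_abs hlow hup).trans (max_le_add_of_nonneg (abs_nonneg _) (abs_nonneg _))
  have hlim : Tendsto (fun t => ∫ x, slope (F · x) a t ∂μ) (𝓝[>] a) (𝓝 (∫ x, F' x ∂μ)) := by
    refine tendsto_integral_filter_of_dominated_convergence
      (fun x => ‖F' x‖ + ‖slope (F · x) a b‖) ?_ ?_ (hF'.add (hslope_int b hb).norm) ?_
    · filter_upwards [Ioc_mem_nhdsGT hab] with t ht
      exact (hslope_int t (Ioc_subset_Icc_self ht)).aestronglyMeasurable
    · filter_upwards [Ioc_mem_nhdsGT hab] with t ht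
      exact ae_of_all _ (hslope_bound t ht)
    · exact ae_of_all _ fun x => (hasDerivWithinAt_iff_tendsto_slope' self_notMem_Ioi).1 (hderiv x)
  rw [← hasDerivWithinAt_Ioi_iff_Ici, hasDerivWithinAt_iff_tendsto_slope' self_notMem_Ioi]
  refine hlim.congr' ?_
  filter_upwards [Ioc_mem_nhdsGT hab] with t ht
  simp only [slope_def_field]
  rw [integral_div, integral_sub (hint t (Ioc_subset_Icc_self ht)) (hint a ha)]

theorem ConvexOn.comp_add_mul {φ : ℝ → ℝ} {s : Set ℝ} (hφ : ConvexOn ℝ s φ) (c d : ℝ) :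
    ConvexOn ℝ ((fun t => c + t * d) ⁻¹' s) (fun t => φ (c + t * d)) := by
  have hline : ⇑(AffineMap.lineMap (k := ℝ) c (c + d)) = fun t => c + t * d := by
    ext t
    simp only [AffineMap.lineMap_apply_ring']
    ring
  have := hφ.comp_affineMap (AffineMap.lineMap c (c + d))
  rw [hline] at this
  exact this

theorem Real.convexOn_mul_log_sub_one :
    ConvexOn ℝ (Ici 0) (fun s : ℝ => s * (Real.log s - 1)) := by
  have hφ : (fun s : ℝ => s * (Real.log s - 1)) = (fun s => s * Real.log s) - id := by
    ext s
    simp only [Pi.sub_apply, id_eq]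
    ring
  exact hφ ▸ Real.convexOn_mul_log.sub (concaveOn_id (convex_Ici 0))

theorem Real.hasDerivAt_mul_log_sub_one {a : ℝ} (ha : a ≠ 0) :
    HasDerivAt (fun s : ℝ => s * (Real.log s - 1)) (Real.log a) a := by
  have h := (Real.hasDerivAt_mul_log ha).sub (hasDerivAt_id' a)
  rw [add_sub_cancel_right] at h
  exact h.congr_of_eventuallyEq (.of_forall fun s => mul_sub_one _ _)

theorem entropy_directional_derivative_general (d : ℕ)
    (α : EuclideanSpace ℝ (Fin d) → ℝ)
    (hα_pos : ∀ x, 0 < α x)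
    (h : EuclideanSpace ℝ (Fin d) → ℝ)
    (hfeas : ∀ᶠ t in 𝓝[≥] (0 : ℝ),
      (∀ x, 0 ≤ α x + t * h x) ∧
      Integrable (fun x => α x + t * h x) ∧
      (∫ x, (α x + t * h x)) = 1 ∧
      Integrable (fun x => (α x + t * h x) * (Real.log (α x + t * h x) - 1)))
    (hdom : Integrable (fun x => |h x| * |Real.log (α x)|)) :
    HasDerivWithinAt
      (fun t : ℝ => ∫ x, (α x + t * h x) * (Real.log (α x + t * h x) - 1))
      (∫ x, h x * Real.log (α x)) (Set.Ici (0 : ℝ)) 0 := by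
  obtain ⟨t₀, ht₀, hfeas⟩ := mem_nhdsGE_iff_exists_Icc_subset.1 hfeas
  refine hasDerivWithinAt_integral_Ici_of_convexOn ht₀ (fun x => ?_) (fun x => ?_)
    (fun t ht => (hfeas ht).2.2.2) (by simpa only [Real.norm_eq_abs, abs_mul] using hdom)
  · exact (Real.convexOn_mul_log_sub_one.comp_add_mul (α x) (h x)).subset
      (fun t ht => (hfeas ht).1 x) (convex_Icc 0 t₀)
  · have hline : HasDerivAt (fun t : ℝ => α x + t * h x) (h x) 0 := by
      simpa using ((hasDerivAt_id' (0 : ℝ)).mul_const (h x)).const_add (α x)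
    have hcomp := (Real.hasDerivAt_mul_log_sub_one (hα_pos x).ne').comp_of_eq 0 hline (by simp)
    exact (hcomp.congr_deriv (mul_comm _ _)).hasDerivWithinAt

/-- let `α, h₁, h₂ : ℝ^d → ℝ` be probability density functions
(nonnegative, Lebesgue-integrable, integral 1) with `α` everywhere positive, and
`h = h₁ − h₂`.  With `E(ρ) = ∫ ρ (log ρ − 1)`, assume that for all sufficiently
small `t ≥ 0` the function `α + t h` is a nonnegative density and `E(α + t h)` is
finite (i.e. the integrand is integrable), and that `∫ |h| |log α| < ∞`.  Then the
one-sided derivative of `t ↦ E(α + t h)` at `t = 0` exists and equals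
`∫ h log α`. -/
theorem entropy_directional_derivative (d : ℕ)
    (α h₁ h₂ : EuclideanSpace ℝ (Fin d) → ℝ)
    (hα_pos : ∀ x, 0 < α x) (hh₁_nonneg : ∀ x, 0 ≤ h₁ x) (hh₂_nonneg : ∀ x, 0 ≤ h₂ x)
    (hα_int : Integrable α) (hh₁_int : Integrable h₁) (hh₂_int : Integrable h₂)
    (hα_one : ∫ x, α x = 1) (hh₁_one : ∫ x, h₁ x = 1) (hh₂_one : ∫ x, h₂ x = 1)
    (h : EuclideanSpace ℝ (Fin d) → ℝ) (hh : h = fun x => h₁ x - h₂ x)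
    (hfeas : ∀ᶠ t in 𝓝[≥] (0 : ℝ),
      (∀ x, 0 ≤ α x + t * h x) ∧
      Integrable (fun x => α x + t * h x) ∧
      (∫ x, (α x + t * h x)) = 1 ∧
      Integrable (fun x => (α x + t * h x) * (Real.log (α x + t * h x) - 1)))
    (hdom : Integrable (fun x => |h x| * |Real.log (α x)|)) :
    HasDerivWithinAt
      (fun t : ℝ => ∫ x, (α x + t * h x) * (Real.log (α x + t * h x) - 1))
      (∫ x, h x * Real.log (α x)) (Set.Ici (0 : ℝ)) 0 :=
  entropy_directional_derivative_general d α hα_pos h hfeas hdom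
end
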